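/- Let X be a random variable on a discrete probability space with finite range 𝒳 and let ρ be a random state on a finite-dimensional complex Hilbert space, defined on the same probability space. Then D(X | ρ) = tr( Σ_{x∈𝒳} P_X(x)² ρ_x² ) − (1/|𝒳|) tr([ρ]²), where ρ_x := [ρ | X = x] for each x ∈ 𝒳 and P_X is the distribution of X. -/

import Mathlib

open Matrix
open scoped Kronecker ComplexOrder

noncomputable section

/-- A density operator: positive semidefinite with trace one. -/
def IsDensityOp {d : Type*} [Fintype d] [DecidableEq d] (ρ : Matrix d d ℂ) : Prop :=
  ρ.PosSemidef ∧ ρ.trace = 1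

/-- The operator absolute value `|A| = (A Aᴴ)^(1/2)`. -/
noncomputable def matAbs {d : Type*} [Fintype d] [DecidableEq d] (A : Matrix d d ℂ) :
    Matrix d d ℂ :=
  (Matrix.posSemidef_self_mul_conjTranspose A).1.eigenvectorUnitary.1 *
    Matrix.diagonal ((↑) ∘ (√·) ∘ (Matrix.posSemidef_self_mul_conjTranspose A).1.eigenvalues) *
    (star (Matrix.posSemidef_self_mul_conjTranspose A).1.eigenvectorUnitary : Matrix d d ℂ)

/-- Trace distance `δ(ρ,σ) = (1/2) tr|ρ-σ|`. -/
noncomputable def traceDist {d : Type*} [Fintype d] [DecidableEq d]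
    (ρ σ : Matrix d d ℂ) : ℝ :=
  (1 / 2) * (matAbs (ρ - σ)).trace.re

/-- Squared Hilbert-Schmidt distance `Δ(ρ,σ) = tr((ρ-σ)²)`. -/
noncomputable def hsDistSq {d : Type*} [Fintype d] [DecidableEq d]
    (ρ σ : Matrix d d ℂ) : ℝ :=
  ((ρ - σ) * (ρ - σ)).trace.re

/-- Expectation of a random state. -/
noncomputable def expState {Ω d : Type*} [Fintype d]
    (P : Ω → ℝ) (ρ : Ω → Matrix d d ℂ) : Matrix d d ℂ :=
  ∑' ω, P ω • ρ ω

/-- Probability of an event. -/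
noncomputable def prEvent {Ω : Type*} (P : Ω → ℝ) (E : Set Ω) : ℝ :=
  ∑' ω, E.indicator P ω

/-- Conditional expectation `[ρ | E]` of a random state given an event. -/
noncomputable def condExpState {Ω d : Type*} [Fintype d]
    (P : Ω → ℝ) (ρ : Ω → Matrix d d ℂ) (E : Set Ω) : Matrix d d ℂ :=
  (prEvent P E)⁻¹ • ∑' ω, E.indicator (fun ω => P ω • ρ ω) ω

/-- The classical state `|x⟩⟨x|`. -/
noncomputable def classicalState {𝒳 : Type*} [Fintype 𝒳] [DecidableEq 𝒳] (x : 𝒳) :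
    Matrix 𝒳 𝒳 ℂ :=
  Matrix.single x x 1

/-- The fully mixed state on `𝒳`. -/
noncomputable def uniformState (𝒳 : Type*) [Fintype 𝒳] [DecidableEq 𝒳] : Matrix 𝒳 𝒳 ℂ :=
  (Fintype.card 𝒳 : ℂ)⁻¹ • (1 : Matrix 𝒳 𝒳 ℂ)

/-- Non-uniformity `d(X|ρ) = δ([{X} ⊗ ρ], [{U}] ⊗ [ρ])`. -/
noncomputable def nonUnif {Ω 𝒳 d : Type*} [Fintype 𝒳] [DecidableEq 𝒳]
    [Fintype d] [DecidableEq d]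
    (P : Ω → ℝ) (X : Ω → 𝒳) (ρ : Ω → Matrix d d ℂ) : ℝ :=
  traceDist (expState P (fun ω => classicalState (X ω) ⊗ₖ ρ ω))
    (uniformState 𝒳 ⊗ₖ expState P ρ)

/-- `D(X|ρ) = Δ([{X} ⊗ ρ], [{U}] ⊗ [ρ])`. -/
noncomputable def DNonUnif {Ω 𝒳 d : Type*} [Fintype 𝒳] [DecidableEq 𝒳]
    [Fintype d] [DecidableEq d]
    (P : Ω → ℝ) (X : Ω → 𝒳) (ρ : Ω → Matrix d d ℂ) : ℝ :=
  hsDistSq (expState P (fun ω => classicalState (X ω) ⊗ₖ ρ ω))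
    (uniformState 𝒳 ⊗ₖ expState P ρ)

/-- Rényi entropy of order 0: `log₂ rank ρ`. -/
noncomputable def renyiS0 {d : Type*} [Fintype d] [DecidableEq d] (ρ : Matrix d d ℂ) : ℝ :=
  Real.logb 2 (ρ.rank)

/-- Rényi entropy of order 2: `-log₂ tr(ρ²)`. -/
noncomputable def renyiS2 {d : Type*} [Fintype d] [DecidableEq d] (ρ : Matrix d d ℂ) : ℝ :=
  -Real.logb 2 ((ρ * ρ).trace.re)

/-- Maximal eigenvalue of a Hermitian matrix. -/
noncomputable def lambdaMax {d : Type*} [Fintype d] [DecidableEq d] (ρ : Matrix d d ℂ) : ℝ :=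
  if h : ρ.IsHermitian then ⨆ i, h.eigenvalues i else 0

/-- Von Neumann entropy `S(ρ) = -tr(ρ log₂ ρ)` (in bits). -/
noncomputable def vnEntropy {d : Type*} [Fintype d] [DecidableEq d] (ρ : Matrix d d ℂ) : ℝ :=
  if h : ρ.IsHermitian then -∑ i, h.eigenvalues i * Real.logb 2 (h.eigenvalues i) else 0

/-- Smooth Rényi entropy of order 0. -/
noncomputable def smoothS0 {d : Type*} [Fintype d] [DecidableEq d]
    (ε : ℝ) (ρ : Matrix d d ℂ) : ℝ :=
  sInf {x : ℝ | ∃ σ : Matrix d d ℂ,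
    IsDensityOp σ ∧ traceDist ρ σ ≤ ε ∧ x = Real.logb 2 (σ.rank)}

/-- Smooth Rényi entropy of order ∞. -/
noncomputable def smoothSinf {d : Type*} [Fintype d] [DecidableEq d]
    (ε : ℝ) (ρ : Matrix d d ℂ) : ℝ :=
  sSup {x : ℝ | ∃ σ : Matrix d d ℂ,
    IsDensityOp σ ∧ traceDist ρ σ ≤ ε ∧ x = -Real.logb 2 (lambdaMax σ)}


/-! Both states are block diagonal along the classical register:
`[{X} ⊗ ρ] = ∑ₓ |x⟩⟨x| ⊗ P_X(x) ρₓ` and `[{U}] ⊗ [ρ] = ∑ₓ |x⟩⟨x| ⊗ [ρ] / |𝒳|`, where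
`∑ₓ P_X(x) ρₓ = [ρ]`. Hence `D(X|ρ) = ∑ₓ tr((P_X(x) ρₓ - [ρ] / |𝒳|)²)`, and expanding the square,
the cross terms contribute `-2 tr([ρ]²) / |𝒳|` and the constant terms `tr([ρ]²) / |𝒳|`.
Summability of all expectations comes from the entries of a density operator being bounded by 1. -/

theorem Matrix.PosSemidef.apply_mul_apply_le {n 𝕜 : Type*} [Fintype n] [DecidableEq n] [RCLike 𝕜]
    {A : Matrix n n 𝕜} (hA : A.PosSemidef) (i j : n) : A i j * A j i ≤ A i i * A j j := by
  have h2 := (hA.submatrix ![i, j]).det_nonneg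
  rw [det_fin_two] at h2
  simpa [sub_nonneg] using h2

theorem IsDensityOp.norm_apply_le_one {d : Type*} [Fintype d] [DecidableEq d]
    {ρ : Matrix d d ℂ} (h : IsDensityOp ρ) (i j : d) : ‖ρ i j‖ ≤ 1 := by
  obtain ⟨hpsd, htr⟩ := h
  have hdiag (k : d) : ρ k k ≤ 1 :=
    htr ▸ Finset.single_le_sum (f := fun l => ρ l l) (fun l _ => hpsd.diag_nonneg)
      (Finset.mem_univ k)
  have hnormSq : (‖ρ i j‖ ^ 2 : ℂ) = ρ i j * ρ j i := by
    rw [← hpsd.1.apply i j, Complex.star_def, Complex.conj_mul', Complex.norm_conj]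
  have hsq : (‖ρ i j‖ ^ 2 : ℂ) ≤ 1 := by
    rw [hnormSq]
    exact (hpsd.apply_mul_apply_le i j).trans
      (mul_le_one₀ (hdiag i) hpsd.diag_nonneg (hdiag j))
  exact pow_le_one_iff_of_nonneg (norm_nonneg _) two_ne_zero |>.mp (by exact_mod_cast hsq)

theorem HasSum.kronecker_left {ι l m n p α : Type*} [CommSemiring α] [TopologicalSpace α]
    [IsTopologicalSemiring α] (K : Matrix l m α) {f : ι → Matrix n p α} {a : Matrix n p α}
    (hf : HasSum f a) : HasSum (fun i => K ⊗ₖ f i) (K ⊗ₖ a) :=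
  hf.map (kroneckerBilinear (R := ℕ) K) (show Continuous (K ⊗ₖ · : Matrix n p α → _) from
    continuous_pi fun _ => continuous_pi fun _ => continuous_const.mul
      (continuous_id.matrix_elem _ _))

theorem Matrix.kronecker_sub {l m n p α : Type*} [NonUnitalNonAssocRing α] (A : Matrix l m α)
    (B₁ B₂ : Matrix n p α) : A ⊗ₖ (B₁ - B₂) = A ⊗ₖ B₁ - A ⊗ₖ B₂ := by
  ext
  simp [mul_sub]

theorem Matrix.trace_sum_single_kronecker {𝒳 m α : Type*} [Fintype 𝒳] [DecidableEq 𝒳]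
    [Fintype m] [Semiring α] (A : 𝒳 → Matrix m m α) :
    (∑ x, single x x (1 : α) ⊗ₖ A x).trace = ∑ x, (A x).trace := by
  simp [trace_sum, trace_kronecker]

theorem Matrix.sum_single_kronecker_mul {𝒳 m α : Type*} [Fintype 𝒳] [DecidableEq 𝒳]
    [Fintype m] [CommSemiring α] (A B : 𝒳 → Matrix m m α) :
    (∑ x, single x x (1 : α) ⊗ₖ A x) * (∑ x, single x x (1 : α) ⊗ₖ B x)
      = ∑ x, single x x (1 : α) ⊗ₖ (A x * B x) := by
  rw [Finset.sum_mul_sum]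
  refine Finset.sum_congr rfl fun x _ => ?_
  rw [Finset.sum_eq_single x (fun y _ hyx => ?_) (by simp), ← mul_kronecker_mul,
    single_mul_single_same, one_mul]
  rw [← mul_kronecker_mul, single_mul_single_of_ne _ _ _ _ (Ne.symm hyx), zero_kronecker]

section RandomState

variable {Ω d : Type*} [Fintype d] {P : Ω → ℝ} {ρ : Ω → Matrix d d ℂ}

theorem summable_smul_of_isDensityOp [DecidableEq d] (hP : Summable P)
    (hρ : ∀ ω, IsDensityOp (ρ ω)) : Summable fun ω => P ω • ρ ω :=
  Pi.summable.mpr fun i => Pi.summable.mpr fun j => hP.abs.of_norm_bounded fun ω => by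
    simpa [norm_smul] using mul_le_of_le_one_right (abs_nonneg _) ((hρ ω).norm_apply_le_one i j)

theorem hasSum_expState_indicator (hs : Summable fun ω => P ω • ρ ω) (E : Set Ω) :
    HasSum (fun ω => E.indicator P ω • ρ ω) (expState (E.indicator P) ρ) := by
  have h := (hs.indicator E).hasSum
  rwa [Set.indicator_smul_left] at h

theorem condExpState_eq_inv_smul (E : Set Ω) :
    condExpState P ρ E = (prEvent P E)⁻¹ • expState (E.indicator P) ρ := by
  simp only [condExpState, expState, Set.indicator_smul_apply_left]

/-- When `Pr[E] = 0` the conditional state is the junk value `0⁻¹ • _ = 0`, but nonnegativity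
forces `P = 0` on `E`, so both sides vanish. -/
theorem prEvent_smul_condExpState (hP : ∀ ω, 0 ≤ P ω) (hPs : Summable P) (E : Set Ω) :
    prEvent P E • condExpState P ρ E = expState (E.indicator P) ρ := by
  rw [condExpState_eq_inv_smul]
  by_cases hE : prEvent P E = 0
  · have hsum : HasSum (E.indicator P) (prEvent P E) := (hPs.indicator E).hasSum
    have hind : E.indicator P = 0 :=
      (hasSum_zero_iff_of_nonneg (Set.indicator_nonneg fun ω _ => hP ω)).mp (hE ▸ hsum)
    simp [hind, expState]
  · exact smul_inv_smul₀ hE _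

theorem sum_expState_indicator_fiber {𝒳 : Type*} [Fintype 𝒳] (X : Ω → 𝒳)
    (hs : Summable fun ω => P ω • ρ ω) :
    ∑ x, expState ({ω | X ω = x}.indicator P) ρ = expState P ρ := by
  refine (hasSum_sum fun x _ => hasSum_expState_indicator hs _).unique ?_
  convert (show HasSum _ (expState P ρ) from hs.hasSum) using 1 with ω
  funext ω
  classical
  simp only [← Finset.sum_smul, Set.indicator_apply, Set.mem_ofPred_eq, Finset.sum_ite_eq,
    Finset.mem_univ, if_true]

theorem expState_classicalState_kronecker {𝒳 : Type*} [Fintype 𝒳] [DecidableEq 𝒳]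
    (X : Ω → 𝒳) (hs : Summable fun ω => P ω • ρ ω) :
    expState P (fun ω => classicalState (X ω) ⊗ₖ ρ ω)
      = ∑ x, classicalState x ⊗ₖ expState ({ω | X ω = x}.indicator P) ρ := by
  refine (hasSum_sum fun x _ => (hasSum_expState_indicator hs {ω | X ω = x}).kronecker_left
    (classicalState x)).tsum_eq ▸ tsum_congr fun ω => ?_
  simp only [Set.indicator_apply, Set.mem_ofPred_eq, ite_smul, zero_smul]
  rw [Finset.sum_eq_single (X ω) (fun x _ hx => by rw [if_neg (Ne.symm hx), kronecker_zero])
    (by simp), if_pos rfl, kronecker_smul]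

end RandomState

theorem uniformState_kronecker {𝒳 d : Type*} [Fintype 𝒳] [DecidableEq 𝒳] (R : Matrix d d ℂ) :
    uniformState 𝒳 ⊗ₖ R = ∑ x, classicalState x ⊗ₖ ((Fintype.card 𝒳 : ℂ)⁻¹ • R) := by
  ext ⟨x, i⟩ ⟨y, j⟩
  simp only [uniformState, classicalState, kroneckerMap_apply, Matrix.sum_apply,
    Matrix.smul_apply, single_apply, one_apply, ite_mul, one_mul, zero_mul]
  rw [Finset.sum_congr rfl fun _ _ => ite_and .., Finset.sum_ite_eq' Finset.univ x,
    if_pos (Finset.mem_univ x)]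
  split_ifs <;> simp

theorem Matrix.sum_trace_sub_mean_mul_self {𝒳 m K : Type*} [Fintype 𝒳] [Fintype m] [Field K]
    (A : 𝒳 → Matrix m m K) :
    ∑ x, ((A x - (Fintype.card 𝒳 : K)⁻¹ • ∑ y, A y) *
        (A x - (Fintype.card 𝒳 : K)⁻¹ • ∑ y, A y)).trace
      = ∑ x, (A x * A x).trace - (Fintype.card 𝒳 : K)⁻¹ * ((∑ x, A x) * ∑ x, A x).trace := by
  set c := (Fintype.card 𝒳 : K)⁻¹
  set R := ∑ x, A x
  have hcc : (Fintype.card 𝒳 : K) * (c * c) = c := by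
    by_cases h : (Fintype.card 𝒳 : K) = 0
    · simp [c, h]
    · rw [← mul_assoc, mul_inv_cancel₀ h, one_mul]
  have hexpand (x : 𝒳) : ((A x - c • R) * (A x - c • R)).trace = (A x * A x).trace
      - c * (A x * R).trace - c * (R * A x).trace + c * c * (R * R).trace := by
    simp only [sub_mul, mul_sub, Matrix.smul_mul, Matrix.mul_smul, trace_sub, trace_smul,
      smul_eq_mul]
    ring
  have hAR : ∑ x, (A x * R).trace = (R * R).trace := by rw [← trace_sum, ← Finset.sum_mul]
  have hRA : ∑ x, (R * A x).trace = (R * R).trace := by rw [← trace_sum, ← Finset.mul_sum]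
  simp only [hexpand, Finset.sum_add_distrib, Finset.sum_sub_distrib, ← Finset.mul_sum, hAR, hRA,
    Finset.sum_const, Finset.card_univ, nsmul_eq_mul]
  linear_combination (R * R).trace * hcc

theorem stmt_8_general {Ω 𝒳 d : Type*} [Fintype 𝒳] [DecidableEq 𝒳]
    [Fintype d] [DecidableEq d]
    (P : Ω → ℝ) (hP : ∀ ω, 0 ≤ P ω) (hP1 : ∑' ω, P ω = 1)
    (X : Ω → 𝒳) (ρ : Ω → Matrix d d ℂ) (hρ : ∀ ω, IsDensityOp (ρ ω)) :
    DNonUnif P X ρ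
      = (∑ x : 𝒳, (prEvent P {ω | X ω = x}) ^ 2 •
            (condExpState P ρ {ω | X ω = x} * condExpState P ρ {ω | X ω = x})).trace.re
        - (1 / (Fintype.card 𝒳 : ℝ)) *
            (expState P ρ * expState P ρ).trace.re := by
  have hPs : Summable P := by
    by_contra h
    simp [tsum_eq_zero_of_not_summable h] at hP1
  have hs := summable_smul_of_isDensityOp hPs hρ
  have hcond (x : 𝒳) : prEvent P {ω | X ω = x} ^ 2 •
      (condExpState P ρ {ω | X ω = x} * condExpState P ρ {ω | X ω = x})
        = expState ({ω | X ω = x}.indicator P) ρ * expState ({ω | X ω = x}.indicator P) ρ := by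
    rw [sq, ← smul_mul_smul_comm, prEvent_smul_condExpState hP hPs]
  rw [DNonUnif, hsDistSq, expState_classicalState_kronecker X hs, uniformState_kronecker,
    ← sum_expState_indicator_fiber X hs, ← Finset.sum_sub_distrib]
  simp_rw [← kronecker_sub, classicalState]
  rw [sum_single_kronecker_mul, trace_sum_single_kronecker, sum_trace_sub_mean_mul_self,
    Finset.sum_congr rfl fun x _ => hcond x, trace_sum, Complex.sub_re, ← Complex.ofReal_natCast,
    ← Complex.ofReal_inv, Complex.re_ofReal_mul, one_div]

/-- **Lemma 7.** `D(X|ρ) = tr((Σ_x P_X(x)² ρ_x²) - (1/|𝒳|)[ρ]²)`. -/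
theorem stmt_8 {Ω 𝒳 d : Type*} [Countable Ω] [Fintype 𝒳] [DecidableEq 𝒳]
    [Fintype d] [DecidableEq d]
    (P : Ω → ℝ) (hP : ∀ ω, 0 ≤ P ω) (hP1 : ∑' ω, P ω = 1)
    (X : Ω → 𝒳) (ρ : Ω → Matrix d d ℂ) (hρ : ∀ ω, IsDensityOp (ρ ω)) :
    DNonUnif P X ρ
      = (∑ x : 𝒳, (prEvent P {ω | X ω = x}) ^ 2 •
            (condExpState P ρ {ω | X ω = x} * condExpState P ρ {ω | X ω = x})).trace.re
        - (1 / (Fintype.card 𝒳 : ℝ)) *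
            (expState P ρ * expState P ρ).trace.re :=
  stmt_8_general P hP hP1 X ρ hρ

end
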